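/- arXiv:2602.12795 — 10 statements merged into one kernel-verified Lean document; each statement's English description precedes it below -/
import Mathlib

section
/- Let n ≥ 1 and let A : Matrix (Fin n) (Fin n) ℤ be symmetric with A.det ≠ 0, and let B := (A.map (Int.cast : ℤ → ℚ))⁻¹. If x : Fin n → ℤ satisfies that x ⬝ᵥ B.mulVec y ∈ Set.range (Int.cast : ℤ → ℚ) for every y : Fin n → ℤ, then there exists z : Fin n → ℤ with x = A.mulVec z. In other words, the linking pairing λ_A on the cokernel (Fin n → ℤ) ⧸ (range of A.mulVecLin) is nonsingular: its adjoint is injective (equivalently bijective, since the cokernel is finite). -/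
/-!
Pairing `x` with the unit vector `e_j` gives the `j`-th entry of `x A⁻¹`, so the hypothesis says
that `x A⁻¹` is an integer vector `z`; then `x = z A`, which is `A z` since `A` is symmetric.
-/

open Matrix

/-- The rational linking value `x ⬝ᵥ A⁻¹ℚ.mulVec y` of two integer vectors,
computed with the inverse of `A` over `ℚ`. -/
noncomputable def linkQ {ι : Type*} [Fintype ι] [DecidableEq ι]
    (A : Matrix ι ι ℤ) (x y : ι → ℤ) : ℚ :=
  (fun i => (x i : ℚ)) ⬝ᵥ ((A.map (Int.cast : ℤ → ℚ))⁻¹).mulVec (fun i => (y i : ℚ))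

section

variable {ι : Type*} [Fintype ι] [DecidableEq ι]

theorem linkQ_single (A : Matrix ι ι ℤ) (x : ι → ℤ) (j : ι) :
    linkQ A x (Pi.single j 1) =
      ((fun i => (x i : ℚ)) ᵥ* (A.map (Int.cast : ℤ → ℚ))⁻¹) j := by
  have hcast : (fun i => ((Pi.single j 1 : ι → ℤ) i : ℚ)) = Pi.single j 1 := by
    ext i
    rw [Pi.single_apply, Pi.single_apply]
    split_ifs <;> simp
  rw [linkQ, hcast, dotProduct_mulVec, dotProduct_single, mul_one]

theorem exists_vecMul_eq_of_linkQ_mem_range {A : Matrix ι ι ℤ} (hdet : A.det ≠ 0) {x : ι → ℤ}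
    (hx : ∀ y : ι → ℤ, linkQ A x y ∈ Set.range (Int.cast : ℤ → ℚ)) :
    ∃ z : ι → ℤ, x = z ᵥ* A := by
  have hunit : IsUnit (A.map (Int.cast : ℤ → ℚ)).det := by
    rw [isUnit_iff_ne_zero, ← Int.cast_det]
    exact_mod_cast hdet
  choose z hz using fun j => hx (Pi.single j 1)
  have hzQ : (Int.cast ∘ z : ι → ℚ) = (fun i => (x i : ℚ)) ᵥ* (A.map (Int.cast : ℤ → ℚ))⁻¹ :=
    funext fun j => (hz j).trans (linkQ_single A x j)
  refine ⟨z, funext fun i => Int.cast_injective (α := ℚ) ?_⟩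
  calc (x i : ℚ) = ((Int.cast ∘ z) ᵥ* A.map (Int.cast : ℤ → ℚ)) i := by
        rw [hzQ, vecMul_vecMul, nonsing_inv_mul _ hunit, vecMul_one]
    _ = ((z ᵥ* A) i : ℤ) := by
        simpa using (RingHom.map_vecMul (Int.castRingHom ℚ) A z i).symm

end

theorem stmt_1_general (n : ℕ) (A : Matrix (Fin n) (Fin n) ℤ)
    (hsymm : Aᵀ = A) (hdet : A.det ≠ 0) (x : Fin n → ℤ)
    (hx : ∀ y : Fin n → ℤ, linkQ A x y ∈ Set.range (Int.cast : ℤ → ℚ)) :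
    ∃ z : Fin n → ℤ, x = A.mulVec z := by
  obtain ⟨z, rfl⟩ := exists_vecMul_eq_of_linkQ_mem_range hdet hx
  exact ⟨z, by rw [← mulVec_transpose, hsymm]⟩

/-- Nonsingularity of the linking pairing: if `x` pairs integrally with every `y`,
then `x` lies in the image of `A`. -/
theorem stmt_1 (n : ℕ) (hn : 1 ≤ n) (A : Matrix (Fin n) (Fin n) ℤ)
    (hsymm : Aᵀ = A) (hdet : A.det ≠ 0) (x : Fin n → ℤ)
    (hx : ∀ y : Fin n → ℤ, linkQ A x y ∈ Set.range (Int.cast : ℤ → ℚ)) :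
    ∃ z : Fin n → ℤ, x = A.mulVec z :=
  stmt_1_general n A hsymm hdet x hx
end

section
/- Let n ≥ 1 and a : ℤ. The cyclic pairing ⟨a/n⟩ on ZMod n is nonsingular — i.e. for every x : ℤ, if the class of (a * x * y : ℚ) / n in AddCircle (1 : ℚ) is 0 for every y : ℤ, then (n : ℤ) ∣ x — if and only if Int.gcd a n = 1. -/
/-!
The pairing vanishes at `(x, y)` exactly when `n ∣ a * x * y`, so `x` lies in its left kernel
iff `a * x = 0` in `ZMod n`. Nonsingularity thus says that `a` is a non-zero-divisor of the finite
ring `ZMod n`, i.e. a unit, i.e. coprime to `n`.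
-/

theorem AddCircle.coe_intCast_div_eq_zero_iff {𝕜 : Type*} [Field 𝕜] [LinearOrder 𝕜]
    [IsStrictOrderedRing 𝕜] {m n : ℤ} (hn : n ≠ 0) :
    ((m / n : 𝕜) : AddCircle (1 : 𝕜)) = 0 ↔ n ∣ m := by
  have hn' : (n : 𝕜) ≠ 0 := Int.cast_ne_zero.mpr hn
  simp only [AddCircle.coe_eq_zero_iff, zsmul_eq_mul, mul_one, eq_div_iff hn']
  exact ⟨fun ⟨k, hk⟩ ↦ ⟨k, by exact_mod_cast (mul_comm (n : 𝕜) k ▸ hk).symm⟩,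
    fun ⟨k, hk⟩ ↦ ⟨k, by rw [hk]; push_cast; ring⟩⟩

theorem ZMod.intCast_mem_nonZeroDivisors_iff {n : ℕ} [NeZero n] {a : ℤ} :
    (a : ZMod n) ∈ nonZeroDivisors (ZMod n) ↔ Int.gcd a n = 1 := by
  rw [← isUnit_iff_mem_nonZeroDivisors_of_finite, ZMod.coe_int_isUnit_iff_isCoprime,
    isCoprime_comm, Int.isCoprime_iff_gcd_eq_one]

theorem Int.forall_dvd_mul_imp_dvd_iff_gcd_eq_one {n : ℕ} [NeZero n] {a : ℤ} :
    (∀ x : ℤ, (n : ℤ) ∣ a * x → (n : ℤ) ∣ x) ↔ Int.gcd a n = 1 := by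
  rw [← ZMod.intCast_mem_nonZeroDivisors_iff, mem_nonZeroDivisors_iff_left,
    (ZMod.intCast_surjective (n := n)).forall]
  simp only [← Int.cast_mul, ZMod.intCast_zmod_eq_zero_iff_dvd]

/-- The cyclic pairing `⟨a/n⟩` on `ZMod n` is nonsingular iff `gcd(a, n) = 1`. -/
theorem stmt_9 (n : ℕ) (hn : 1 ≤ n) (a : ℤ) :
    (∀ x : ℤ,
        (∀ y : ℤ,
          ((((a : ℚ) * (x : ℚ) * (y : ℚ)) / (n : ℚ) : ℚ) : AddCircle (1 : ℚ)) = 0) →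
        (n : ℤ) ∣ x) ↔
      Int.gcd a n = 1 := by
  have : NeZero n := ⟨by omega⟩
  have pairing_eq_zero_iff (x y : ℤ) :
      ((((a : ℚ) * (x : ℚ) * (y : ℚ)) / (n : ℚ) : ℚ) : AddCircle (1 : ℚ)) = 0 ↔
        (n : ℤ) ∣ a * x * y := by
    exact_mod_cast AddCircle.coe_intCast_div_eq_zero_iff (𝕜 := ℚ) (m := a * x * y)
      (Int.natCast_ne_zero.mpr (NeZero.ne n))
  have left_kernel_iff (x : ℤ) : (∀ y : ℤ, (n : ℤ) ∣ a * x * y) ↔ (n : ℤ) ∣ a * x :=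
    ⟨fun h ↦ by simpa using h 1, fun h y ↦ h.mul_right y⟩
  simp only [pairing_eq_zero_iff, left_kernel_iff]
  exact Int.forall_dvd_mul_imp_dvd_iff_gcd_eq_one
end

section
/- Let n ≥ 2 and let a, b : ℤ satisfy Int.gcd a n = 1 and Int.gcd b n = 1. Then the cyclic pairings ⟨a/n⟩ and ⟨b/n⟩ on ZMod n are isometric — i.e. there exists an additive automorphism φ : ZMod n ≃+ ZMod n such that for all x, y : ZMod n, the class of (b * (φ x).val * (φ y).val : ℚ) / n equals the class of (a * x.val * y.val : ℚ) / n in AddCircle (1 : ℚ) — if and only if there exists a unit u : (ZMod n)ˣ with (b : ZMod n) = (↑u)^2 * (a : ZMod n). -/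
/-!
Every additive automorphism of `ZMod n` is multiplication by a unit `u`, and since the pairing
`⟨a/n⟩(x, y)` only depends on `a x y` in `ZMod n`, multiplication by `u` carries `⟨b/n⟩` to
`⟨a/n⟩` exactly when `b u² = a` in `ZMod n`.
-/

theorem Units.exists_mul_sq_eq_iff_exists_eq_sq_mul {M : Type*} [CommMonoid M] {a b : M} :
    (∃ u : Mˣ, b * u ^ 2 = a) ↔ ∃ u : Mˣ, b = u ^ 2 * a := by
  simp only [← Units.val_pow_eq_pow_val]
  refine ⟨fun ⟨u, hu⟩ => ⟨u⁻¹, ?_⟩, fun ⟨u, hu⟩ => ⟨u⁻¹, ?_⟩⟩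
  · rw [← hu, mul_comm b, inv_pow, Units.inv_mul_cancel_left]
  · rw [hu, inv_pow, mul_comm, Units.inv_mul_cancel_left]

namespace ZMod

variable {n : ℕ}

theorem exists_addAut_iff_exists_units {P : AddAut (ZMod n) → Prop} :
    (∃ φ, P φ) ↔ ∃ u : (ZMod n)ˣ, P (AddAut.mulLeft u) :=
  ((AddAutEquivUnits n).toEquiv.trans Additive.toMul).exists_congr_left

end ZMod

theorem AddCircle.coe_intCast_div_eq_iff {n : ℕ} (hn : n ≠ 0) (k m : ℤ) :
    ((k / n : ℚ) : AddCircle (1 : ℚ)) = ((m / n : ℚ) : AddCircle (1 : ℚ)) ↔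
      (k : ZMod n) = m := by
  have hn' : (n : ℚ) ≠ 0 := by exact_mod_cast hn
  rw [eq_comm, ZMod.intCast_eq_intCast_iff_dvd_sub, ← sub_eq_zero, ← AddCircle.coe_sub,
    AddCircle.coe_eq_zero_iff]
  simp only [zsmul_eq_mul, mul_one, ← sub_div, eq_div_iff hn', dvd_iff_exists_eq_mul_left]
  constructor <;> rintro ⟨c, hc⟩ <;> exact ⟨c, by exact_mod_cast hc.symm⟩

def cyclicPairing (n : ℕ) (a : ℤ) (x y : ZMod n) : AddCircle (1 : ℚ) :=
  ((((a : ℚ) * (x.val : ℚ) * (y.val : ℚ)) / (n : ℚ) : ℚ) : AddCircle (1 : ℚ))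

theorem cyclicPairing_eq_iff {n : ℕ} [NeZero n] {a b : ℤ} {x y z w : ZMod n} :
    cyclicPairing n a x y = cyclicPairing n b z w ↔ (a : ZMod n) * x * y = b * z * w := by
  have h (c : ℤ) (x y : ZMod n) :
      cyclicPairing n c x y = (((c * x.val * y.val : ℤ) / n : ℚ) : AddCircle (1 : ℚ)) := by
    simp [cyclicPairing]
  rw [h, h, AddCircle.coe_intCast_div_eq_iff (NeZero.ne n)]
  simp

theorem cyclicPairing_mulLeft_eq_iff {n : ℕ} [NeZero n] (a b : ℤ) (u : (ZMod n)ˣ) :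
    (∀ x y, cyclicPairing n b (u * x) (u * y) = cyclicPairing n a x y) ↔
      (b : ZMod n) * u ^ 2 = a := by
  simp only [cyclicPairing_eq_iff]
  refine ⟨fun h => by simpa [sq, mul_assoc] using h 1 1, fun h x y => ?_⟩
  rw [← h]
  ring

theorem stmt_10_general (n : ℕ) (hn : 2 ≤ n) (a b : ℤ) :
    (∃ φ : ZMod n ≃+ ZMod n, ∀ x y : ZMod n,
        ((((b : ℚ) * ((φ x).val : ℚ) * ((φ y).val : ℚ)) / (n : ℚ) : ℚ) : AddCircle (1 : ℚ)) =
          ((((a : ℚ) * (x.val : ℚ) * (y.val : ℚ)) / (n : ℚ) : ℚ) : AddCircle (1 : ℚ))) ↔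
      ∃ u : (ZMod n)ˣ, (b : ZMod n) = (↑u : ZMod n) ^ 2 * (a : ZMod n) := by
  have : NeZero n := ⟨by omega⟩
  change (∃ φ : AddAut (ZMod n), ∀ x y,
    cyclicPairing n b (φ x) (φ y) = cyclicPairing n a x y) ↔ _
  simp only [ZMod.exists_addAut_iff_exists_units, AddAut.mulLeft_apply_apply, Units.smul_def,
    smul_eq_mul, cyclicPairing_mulLeft_eq_iff]
  exact Units.exists_mul_sq_eq_iff_exists_eq_sq_mul

/-- For `n ≥ 2` and units `a, b` mod `n`, the cyclic pairings `⟨a/n⟩` and `⟨b/n⟩` on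
`ZMod n` are isometric iff `b ≡ u² a (mod n)` for some unit `u`. -/
theorem stmt_10 (n : ℕ) (hn : 2 ≤ n) (a b : ℤ)
    (ha : Int.gcd a n = 1) (hb : Int.gcd b n = 1) :
    (∃ φ : ZMod n ≃+ ZMod n, ∀ x y : ZMod n,
        ((((b : ℚ) * ((φ x).val : ℚ) * ((φ y).val : ℚ)) / (n : ℚ) : ℚ) : AddCircle (1 : ℚ)) =
          ((((a : ℚ) * (x.val : ℚ) * (y.val : ℚ)) / (n : ℚ) : ℚ) : AddCircle (1 : ℚ))) ↔
      ∃ u : (ZMod n)ˣ, (b : ZMod n) = (↑u : ZMod n) ^ 2 * (a : ZMod n) :=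
  stmt_10_general n hn a b
end

section
/- Let G be a finite additive abelian group and let λ : G →+ G →+ AddCircle (1 : ℚ) be symmetric (λ x y = λ y x) with bijective adjoint (the map G → (G →+ AddCircle (1 : ℚ)), x ↦ λ x, is bijective). Let p be a prime and k ≥ 1. Then for every z : G, the following are equivalent: (a) λ z y = 0 for every y : G with p^k • y = 0; (b) there exists w : G with z = p^k • w. That is, the annihilator of the p^k-torsion subgroup under λ equals p^k • G. -/
/-!
Through `l`, the group `G` is its own character group `Hom(G, ℚ/ℤ)`, and multiplication by `n`
on `G` becomes precomposition with `n • ·`. A character vanishing on the `n`-torsion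
`ker (n • ·)` factors through `G ⧸ ker (n • ·) ≅ n • G ⊆ G`; as `ℚ/ℤ` is divisible, hence an
injective `ℤ`-module, it extends to a character `l w` of `G`, so that it equals
`l w ∘ (n • ·) = l (n • w)`.
-/

theorem AddMonoidHom.exists_comp_eq_of_ker_le {A B Q : Type*} [AddCommGroup A] [AddCommGroup B]
    [AddCommGroup Q] [DivisibleBy Q ℤ] (f : A →+ B) (χ : A →+ Q) (h : f.ker ≤ χ.ker) :
    ∃ g : B →+ Q, g.comp f = χ := by
  obtain ⟨g, hg⟩ := (Module.Baer.of_divisible Q).extension_property_addMonoidHom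
    (QuotientAddGroup.kerLift f) (QuotientAddGroup.kerLift_injective f)
    (QuotientAddGroup.lift f.ker χ h)
  exact ⟨g, AddMonoidHom.ext fun a => DFunLike.congr_fun hg (a : A ⧸ f.ker)⟩

theorem pairing_eq_zero_on_torsion_iff_exists_eq_nsmul {G Q : Type*} [AddCommGroup G]
    [AddCommGroup Q] [DivisibleBy Q ℤ] (l : G →+ G →+ Q)
    (hadj : Function.Bijective fun x : G => l x) (n : ℕ) (z : G) :
    (∀ y : G, n • y = 0 → l z y = 0) ↔ ∃ w : G, z = n • w := by
  have pairing_nsmul (w y : G) : l (n • w) y = l w (n • y) := by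
    rw [map_nsmul, AddMonoidHom.nsmul_apply, map_nsmul]
  constructor
  · intro hz
    obtain ⟨χ, hχ⟩ := (nsmulAddMonoidHom n : G →+ G).exists_comp_eq_of_ker_le (l z) hz
    obtain ⟨w, rfl⟩ := hadj.2 χ
    refine ⟨w, hadj.1 (AddMonoidHom.ext fun y => ?_)⟩
    show l z y = l (n • w) y
    rw [pairing_nsmul, ← hχ]
    rfl
  · rintro ⟨w, rfl⟩ y hy
    rw [pairing_nsmul, hy, map_zero]

theorem stmt_11_general (G : Type*) [AddCommGroup G]
    (l : G →+ G →+ AddCircle (1 : ℚ))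
    (hadj : Function.Bijective fun x : G => l x)
    (p : ℕ) (k : ℕ) (z : G) :
    (∀ y : G, p ^ k • y = 0 → l z y = 0) ↔ ∃ w : G, z = p ^ k • w :=
  pairing_eq_zero_on_torsion_iff_exists_eq_nsmul l hadj (p ^ k) z

/-- For a nonsingular symmetric linking pairing on a finite abelian group, the
annihilator of the `p^k`-torsion subgroup equals `p^k • G`. -/
theorem stmt_11 (G : Type*) [AddCommGroup G] [Fintype G]
    (l : G →+ G →+ AddCircle (1 : ℚ))
    (hsymm : ∀ x y : G, l x y = l y x)
    (hadj : Function.Bijective fun x : G => l x)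
    (p : ℕ) (hp : p.Prime) (k : ℕ) (hk : 1 ≤ k) (z : G) :
    (∀ y : G, p ^ k • y = 0 → l z y = 0) ↔ ∃ w : G, z = p ^ k • w :=
  stmt_11_general G l hadj p k z
end

section
/- Let G be a finite additive abelian group and let λ : G →+ G →+ AddCircle (1 : ℚ) be symmetric with bijective adjoint. Let p be a prime and k ≥ 1. Suppose x : G satisfies p^k • x = 0 and p^(k-1) • (λ x y) = 0 for every y : G with p^k • y = 0. Then there exist u, v : G with p^(k-1) • u = 0, p^(k+1) • v = 0, and x = u + p • v. (This is the nonsingularity of the induced layer form b_k on P_k(G) = G_k / (G_{k-1} + p·G_{k+1}): its radical is trivial.) -/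
/-!
By nonsingularity of `λ`, everything annihilating the `n`-torsion `G[n]` lies in `n • G`: a
character of `G / n • G` not vanishing at `z` is `λ a` for some `a`, and `a ∈ G[n]` because
`λ (n • a) = λ a ∘ (n • ·)` vanishes. Now `z = p^(k-1) • x` annihilates `G[p^k]`, so
`z = p^k • w`, and `x = (x - p • w) + p • w` with `p^(k-1) • (x - p • w) = z - z = 0`.
-/

theorem AddSubgroup.exists_addCircle_hom_eq_zero_of_notMem {G : Type*} [AddCommGroup G]
    (H : AddSubgroup G) {z : G} (hz : z ∉ H) :
    ∃ χ : G →+ AddCircle (1 : ℚ), (∀ h ∈ H, χ h = 0) ∧ χ z ≠ 0 := by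
  have hπz : (QuotientAddGroup.mk' H) z ≠ 0 := by
    simpa [QuotientAddGroup.eq_zero_iff] using hz
  obtain ⟨c, hc⟩ := CharacterModule.exists_character_apply_ne_zero_of_ne_zero hπz
  refine ⟨(c : G ⧸ H →+ AddCircle (1 : ℚ)).comp (QuotientAddGroup.mk' H),
    fun h hh => ?_, hc⟩
  change c (QuotientAddGroup.mk' H h) = 0
  rw [QuotientAddGroup.mk'_apply, (QuotientAddGroup.eq_zero_iff h).mpr hh, map_zero]

theorem exists_nsmul_eq_of_pairing_torsion_eq_zero {G : Type*} [AddCommGroup G]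
    (l : G →+ G →+ AddCircle (1 : ℚ)) (hsymm : ∀ x y : G, l x y = l y x)
    (hadj : Function.Bijective fun x : G => l x) (n : ℕ) {z : G}
    (hz : ∀ y : G, n • y = 0 → l z y = 0) : ∃ w : G, n • w = z := by
  by_contra! h
  obtain ⟨χ, hχ, hχz⟩ :=
    (nsmulAddMonoidHom (α := G) n).range.exists_addCircle_hom_eq_zero_of_notMem
      (z := z) fun ⟨w, hw⟩ => h w hw
  obtain ⟨a, rfl⟩ := hadj.2 χ
  have ha : n • a = 0 := hadj.1 <| by
    ext y
    simpa [map_nsmul] using hχ (n • y) ⟨y, rfl⟩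
  exact hχz (by rw [hsymm]; exact hz a ha)

theorem stmt_12_general (G : Type*) [AddCommGroup G]
    (l : G →+ G →+ AddCircle (1 : ℚ))
    (hsymm : ∀ x y : G, l x y = l y x)
    (hadj : Function.Bijective fun x : G => l x)
    (p : ℕ) (k : ℕ) (hk : 1 ≤ k) (x : G)
    (hx : p ^ k • x = 0)
    (hlx : ∀ y : G, p ^ k • y = 0 → p ^ (k - 1) • (l x y) = 0) :
    ∃ u v : G, p ^ (k - 1) • u = 0 ∧ p ^ (k + 1) • v = 0 ∧ x = u + p • v := by
  have hk' : k - 1 + 1 = k := Nat.sub_add_cancel hk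
  obtain ⟨w, hw⟩ := exists_nsmul_eq_of_pairing_torsion_eq_zero l hsymm hadj (p ^ k)
    (z := p ^ (k - 1) • x) fun y hy => by rw [map_nsmul, AddMonoidHom.nsmul_apply, hlx y hy]
  refine ⟨x - p • w, w, ?_, ?_, by abel⟩
  · rw [smul_sub, smul_smul, ← pow_succ, hk', hw, sub_self]
  · rw [pow_succ', mul_smul, hw, smul_smul, ← pow_succ', hk', hx]

/-- Nonsingularity of the layer form `b_k`: an element of `G_k` pairing trivially (at
layer `k`) with all of `G_k` lies in `G_{k-1} + p • G_{k+1}`. -/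
theorem stmt_12 (G : Type*) [AddCommGroup G] [Fintype G]
    (l : G →+ G →+ AddCircle (1 : ℚ))
    (hsymm : ∀ x y : G, l x y = l y x)
    (hadj : Function.Bijective fun x : G => l x)
    (p : ℕ) (hp : p.Prime) (k : ℕ) (hk : 1 ≤ k) (x : G)
    (hx : p ^ k • x = 0)
    (hlx : ∀ y : G, p ^ k • y = 0 → p ^ (k - 1) • (l x y) = 0) :
    ∃ u v : G, p ^ (k - 1) • u = 0 ∧ p ^ (k + 1) • v = 0 ∧ x = u + p • v :=
  stmt_12_general G l hsymm hadj p k hk x hx hlx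
end

section
/- Let n : ℕ and let M : Matrix (Fin n) (Fin n) (ZMod 2) be symmetric with IsUnit M.det and with zero diagonal (M i i = 0 for all i). Then n is even, say n = 2 * m, and there exist an equivalence e : Fin m × Fin 2 ≃ Fin n and a matrix S : Matrix (Fin n) (Fin n) (ZMod 2) with IsUnit S.det such that Sᵀ * M * S = (Matrix.blockDiagonal (fun _ : Fin m => !![0, 1; 1, 0])).reindex e e. That is, every nonsingular alternating symmetric bilinear form over 𝔽₂ is congruent to an orthogonal sum of m hyperbolic planes. -/
/-!
Pick an entry `M i j ≠ 0`; since the diagonal vanishes, `i ≠ j`, and the `2 × 2` block on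
`{i, j}` is `!![0, a; -a, 0]` with `a` a unit. Clearing the rest of rows and columns `i, j` is a
congruence (block Gaussian elimination against the invertible block, which works because the
form is alternating), rescaling one basis vector turns the block into `!![0, 1; -1, 0]`, and the
complementary block is again alternating and nonsingular, so induction on the size applies.
Over `𝔽₂`, symmetric means skew-symmetric and `!![0, 1; -1, 0] = !![0, 1; 1, 0]`.
-/

open Matrix

namespace Equiv

def prodFinSucc (α : Type*) (m : ℕ) : α × Fin (m + 1) ≃ α ⊕ α × Fin m where
  toFun p := Fin.cases (Sum.inl p.1) (fun i => Sum.inr (p.1, i)) p.2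
  invFun := Sum.elim (fun a => (a, 0)) (fun p => (p.1, p.2.succ))
  left_inv := fun ⟨a, i⟩ => by cases i using Fin.cases <;> rfl
  right_inv := by rintro (a | ⟨a, i⟩) <;> rfl

end Equiv

namespace Matrix

variable {R : Type*} [CommRing R] {ι κ : Type*}

structure IsAlt (M : Matrix ι ι R) : Prop where
  transpose_eq_neg : Mᵀ = -M
  diag_eq_zero : ∀ i, M i i = 0

theorem IsAlt.apply {M : Matrix ι ι R} (hM : M.IsAlt) (i j : ι) : M j i = -M i j := by
  rw [← transpose_apply M j i, hM.transpose_eq_neg, neg_apply, neg_neg]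

theorem IsAlt.submatrix {M : Matrix ι ι R} (hM : M.IsAlt) (f : κ → ι) :
    (M.submatrix f f).IsAlt where
  transpose_eq_neg := by rw [transpose_submatrix, hM.transpose_eq_neg]; rfl
  diag_eq_zero i := hM.diag_eq_zero (f i)

theorem IsAlt.dotProduct_mulVec_self [Fintype ι] {M : Matrix ι ι R} (hM : M.IsAlt)
    (v : ι → R) : v ⬝ᵥ (M *ᵥ v) = 0 := by
  simp only [dotProduct, mulVec, Finset.mul_sum, ← Finset.sum_product']
  refine Finset.sum_ninvolution Prod.swap (fun p => ?_) (fun p hp hswap => ?_)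
    (fun _ => Finset.mem_univ _) Prod.swap_swap
  · simp only [Prod.fst_swap, Prod.snd_swap, hM.apply p.1 p.2]
    ring
  · obtain ⟨i, j⟩ := p
    obtain rfl : j = i := congrArg Prod.fst hswap
    simp [hM.diag_eq_zero] at hp

def IsCongruent [Fintype ι] [DecidableEq ι] (M N : Matrix ι ι R) : Prop :=
  ∃ S : Matrix ι ι R, IsUnit S.det ∧ Sᵀ * M * S = N

section IsCongruent

variable [Fintype ι] [DecidableEq ι] [Fintype κ] [DecidableEq κ]

@[refl]
theorem IsCongruent.refl (M : Matrix ι ι R) : M.IsCongruent M :=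
  ⟨1, by simp, by simp⟩

@[trans]
theorem IsCongruent.trans {M N P : Matrix ι ι R} (hMN : M.IsCongruent N)
    (hNP : N.IsCongruent P) : M.IsCongruent P := by
  obtain ⟨S, hS, rfl⟩ := hMN
  obtain ⟨T, hT, rfl⟩ := hNP
  exact ⟨S * T, by simpa only [det_mul] using hS.mul hT, by
    simp only [transpose_mul, Matrix.mul_assoc]⟩

theorem IsCongruent.isAlt {M N : Matrix ι ι R} (h : M.IsCongruent N) (hM : M.IsAlt) :
    N.IsAlt := by
  obtain ⟨S, -, rfl⟩ := h
  refine ⟨by rw [transpose_mul, transpose_mul, transpose_transpose, hM.transpose_eq_neg,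
    Matrix.neg_mul, Matrix.mul_neg, Matrix.mul_assoc], fun i => ?_⟩
  -- the `i`-th diagonal entry of `Sᵀ * M * S` is the form `M` evaluated at the `i`-th column of `S`
  rw [← hM.dotProduct_mulVec_self (S.col i), Matrix.mul_assoc, mul_apply]
  simp [dotProduct, mulVec, mul_apply, Finset.mul_sum]

theorem IsCongruent.isUnit_det {M N : Matrix ι ι R} (h : M.IsCongruent N)
    (hM : IsUnit M.det) : IsUnit N.det := by
  obtain ⟨S, hS, rfl⟩ := h
  simpa only [det_mul, det_transpose] using (hS.mul hM).mul hS

theorem IsCongruent.reindex {M N : Matrix ι ι R} (h : M.IsCongruent N) (e : ι ≃ κ) :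
    (Matrix.reindex e e M).IsCongruent (Matrix.reindex e e N) := by
  obtain ⟨S, hS, rfl⟩ := h
  exact ⟨Matrix.reindex e e S, by rwa [det_reindex_self], by
    simp only [reindex_apply, transpose_submatrix, submatrix_mul_equiv]⟩

theorem IsCongruent.fromBlocks {A A' : Matrix ι ι R} {D D' : Matrix κ κ R}
    (hA : A.IsCongruent A') (hD : D.IsCongruent D') :
    (Matrix.fromBlocks A 0 0 D).IsCongruent (Matrix.fromBlocks A' 0 0 D') := by
  obtain ⟨S, hS, rfl⟩ := hA
  obtain ⟨T, hT, rfl⟩ := hD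
  exact ⟨Matrix.fromBlocks S 0 0 T, by simpa only [det_fromBlocks_zero₂₁] using hS.mul hT, by
    simp [fromBlocks_transpose, fromBlocks_multiply]⟩

theorem isCongruent_fromBlocks_schur (A : Matrix ι ι R) (B : Matrix ι κ R) (D : Matrix κ κ R)
    (hA : Aᵀ = -A) (hdet : IsUnit A.det) :
    (fromBlocks A B (-Bᵀ) D).IsCongruent (fromBlocks A 0 0 (D + Bᵀ * A⁻¹ * B)) := by
  have hAinv : A⁻¹ᵀ = -A⁻¹ := by
    rw [transpose_nonsing_inv, hA]
    exact inv_eq_left_inv (by rw [neg_mul_neg, nonsing_inv_mul _ hdet])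
  refine ⟨fromBlocks 1 (-(A⁻¹ * B)) 0 1, by simp, ?_⟩
  simp only [fromBlocks_transpose, fromBlocks_multiply, transpose_neg, transpose_mul, hAinv,
    transpose_one, transpose_zero]
  simp [Matrix.mul_assoc, mul_nonsing_inv_cancel_left _ _ hdet,
    nonsing_inv_mul_cancel_right _ _ hdet, add_comm]

end IsCongruent

theorem isCongruent_altPlane {a : R} (ha : IsUnit a) :
    (!![0, a; -a, 0] : Matrix (Fin 2) (Fin 2) R).IsCongruent !![0, 1; -1, 0] := by
  obtain ⟨u, rfl⟩ := ha
  refine ⟨!![1, 0; 0, ↑u⁻¹], by simp, ?_⟩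
  ext i j
  fin_cases i <;> fin_cases j <;> simp [mul_apply, Fin.sum_univ_two]

theorem reindex_blockDiagonal_fin_succ {α : Type*} [DecidableEq α] {m : ℕ}
    (f : Fin (m + 1) → Matrix α α R) :
    Matrix.reindex (Equiv.prodFinSucc α m) (Equiv.prodFinSucc α m) (blockDiagonal f) =
      fromBlocks (f 0) 0 0 (blockDiagonal fun i => f i.succ) := by
  ext (a | ⟨a, i⟩) (b | ⟨b, j⟩) <;>
    simp [Equiv.prodFinSucc, blockDiagonal_apply, Fin.succ_ne_zero, (Fin.succ_ne_zero _).symm]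

variable (R) in
def symplecticNormalForm (m : ℕ) : Matrix (Fin 2 × Fin m) (Fin 2 × Fin m) R :=
  blockDiagonal fun _ => !![0, 1; -1, 0]

theorem reindex_symplecticNormalForm_succ (m : ℕ) :
    Matrix.reindex (Equiv.prodFinSucc _ m) (Equiv.prodFinSucc _ m)
        (symplecticNormalForm R (m + 1)) =
      fromBlocks !![0, 1; -1, 0] 0 0 (symplecticNormalForm R m) :=
  reindex_blockDiagonal_fin_succ _

theorem IsAlt.exists_isCongruent_fromBlocks [Fintype ι] [DecidableEq ι] [Fintype κ]
    [DecidableEq κ] {M : Matrix ι ι R} (hM : M.IsAlt) (hdet : IsUnit M.det)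
    (σ : Fin 2 ⊕ κ ≃ ι) (ha : IsUnit (M (σ (.inl 0)) (σ (.inl 1)))) :
    ∃ D : Matrix κ κ R, D.IsAlt ∧ IsUnit D.det ∧
      M.IsCongruent (Matrix.reindex σ σ (fromBlocks !![0, 1; -1, 0] 0 0 D)) := by
  set X := Matrix.reindex σ.symm σ.symm M
  set a := M (σ (.inl 0)) (σ (.inl 1))
  have hX : X.IsAlt := hM.submatrix σ
  have hA : X.toBlocks₁₁ = !![0, a; -a, 0] := by
    ext i j
    fin_cases i <;> fin_cases j <;>
      simp [X, a, toBlocks₁₁, hM.diag_eq_zero, hM.apply (σ (.inl 0)) (σ (.inl 1))]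
  have hX_eq : fromBlocks X.toBlocks₁₁ X.toBlocks₁₂ (-X.toBlocks₁₂ᵀ) X.toBlocks₂₂ = X := by
    conv_rhs => rw [← fromBlocks_toBlocks X]
    congr
    ext i j
    exact (hX.apply (.inl j) (.inr i)).symm
  have hdetA : IsUnit X.toBlocks₁₁.det := by
    simpa [hA, det_fin_two_of] using ha.mul ha
  have hXY := isCongruent_fromBlocks_schur X.toBlocks₁₁ X.toBlocks₁₂ X.toBlocks₂₂
    (hX.submatrix Sum.inl).transpose_eq_neg hdetA
  rw [hX_eq, hA] at hXY
  obtain ⟨D, hXJ⟩ : ∃ D, X.IsCongruent (fromBlocks !![0, 1; -1, 0] 0 0 D) :=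
    ⟨_, hXY.trans ((isCongruent_altPlane ha).fromBlocks (.refl _))⟩
  refine ⟨D, (hXJ.isAlt hX).submatrix Sum.inr, ?_, by simpa [X] using hXJ.reindex σ⟩
  have hdetJ := hXJ.isUnit_det (by rwa [det_reindex_self])
  rw [det_fromBlocks_zero₂₁] at hdetJ
  exact isUnit_of_mul_isUnit_right hdetJ

theorem IsAlt.exists_isCongruent_symplecticNormalForm {K ι : Type*} [Field K] [Fintype ι]
    [DecidableEq ι] {M : Matrix ι ι K} (hM : M.IsAlt) (hdet : IsUnit M.det) :
    ∃ (m : ℕ) (e : Fin 2 × Fin m ≃ ι),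
      M.IsCongruent (Matrix.reindex e e (symplecticNormalForm K m)) := by
  induction hn : Fintype.card ι using Nat.strong_induction_on generalizing ι with
  | _ n ih =>
  rcases isEmpty_or_nonempty ι with hι | ⟨⟨i⟩⟩
  · exact ⟨0, Equiv.equivOfIsEmpty _ _, by rw [Subsingleton.elim (Matrix.reindex _ _ _) M]⟩
  obtain ⟨j, hij⟩ : ∃ j, M i j ≠ 0 := by
    by_contra! h
    exact hdet.ne_zero (det_eq_zero_of_row_eq_zero i h)
  have hv : Function.Injective ![i, j] := by
    have hne : i ≠ j := by rintro rfl; exact hij (hM.diag_eq_zero i)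
    intro a b
    fin_cases a <;> fin_cases b <;> simp [hne, hne.symm]
  let σ : Fin 2 ⊕ ↥(Set.range ![i, j])ᶜ ≃ ι :=
    (Equiv.sumCongr (Equiv.ofInjective _ hv) (Equiv.refl _)).trans (Equiv.Set.sumCompl _)
  obtain ⟨D, hD, hDdet, hMD⟩ := hM.exists_isCongruent_fromBlocks hdet σ (isUnit_iff_ne_zero.2 hij)
  have hcard : Fintype.card ↥(Set.range ![i, j])ᶜ < n := by
    have := Fintype.card_congr σ
    simp only [Fintype.card_sum, Fintype.card_fin] at this
    omega
  obtain ⟨m, e, hDe⟩ := ih _ hcard hD hDdet rfl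
  refine ⟨m + 1, (Equiv.prodFinSucc _ m).trans ((Equiv.sumCongr (.refl _) e).trans σ),
    hMD.trans ?_⟩
  have hsum : fromBlocks !![0, 1; -1, 0] 0 0 (Matrix.reindex e e (symplecticNormalForm K m)) =
      Matrix.reindex (Equiv.sumCongr (.refl _) e) (Equiv.sumCongr (.refl _) e)
        (fromBlocks !![0, 1; -1, 0] 0 0 (symplecticNormalForm K m)) := by
    ext (a | a) (b | b) <;> simp
  convert ((IsCongruent.refl _).fromBlocks hDe).reindex σ using 1
  rw [hsum, ← reindex_symplecticNormalForm_succ]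
  rfl

end Matrix

/-- Every nonsingular alternating symmetric bilinear form over `𝔽₂` is congruent to an
orthogonal sum of hyperbolic planes; in particular its dimension is even. -/
theorem stmt_14 (n : ℕ) (M : Matrix (Fin n) (Fin n) (ZMod 2))
    (hsymm : Mᵀ = M) (hdet : IsUnit M.det) (hdiag : ∀ i, M i i = 0) :
    ∃ m : ℕ, n = 2 * m ∧
      ∃ (e : Fin m × Fin 2 ≃ Fin n) (S : Matrix (Fin n) (Fin n) (ZMod 2)),
        IsUnit S.det ∧
          Sᵀ * M * S =
            Matrix.reindex ((Equiv.prodComm (Fin 2) (Fin m)).trans e)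
              ((Equiv.prodComm (Fin 2) (Fin m)).trans e)
              (Matrix.blockDiagonal fun _ : Fin m => (!![0, 1; 1, 0] : Matrix (Fin 2) (Fin 2) (ZMod 2))) := by
  have hM : M.IsAlt := ⟨by rw [hsymm]; ext i j; exact (ZMod.neg_eq_self_mod_two _).symm, hdiag⟩
  obtain ⟨m, e, S, hS, hSM⟩ := hM.exists_isCongruent_symplecticNormalForm hdet
  refine ⟨m, by simpa using (Fintype.card_congr e).symm, (Equiv.prodComm _ _).symm.trans e,
    S, hS, ?_⟩
  rw [hSM, ← Equiv.trans_assoc, Equiv.self_trans_symm, Equiv.refl_trans]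
  -- `-1 = 1` in `ZMod 2`
  rfl
end

section
/- Let n : ℕ and let M : Matrix (Fin n) (Fin n) (ZMod 2) be symmetric with IsUnit M.det, and suppose M is not alternating, i.e. there exists i with M i i = 1. Then there exists S : Matrix (Fin n) (Fin n) (ZMod 2) with IsUnit S.det such that Sᵀ * M * S = 1 (the identity matrix). That is, every nonsingular nonalternating symmetric bilinear form over 𝔽₂ admits an orthonormal basis. -/
/-!
Induction on `n`. A vector `v` with `B(v, v) = 1` splits off, `B ≅ ⟨1⟩ ⊥ B|v^⊥`, so it suffices
to find such a `v` whose orthogonal complement is still nonalternating. First arrange two basis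
vectors with `B(e_i, e_i) = B(e_j, e_j) = 1`, replacing `e_j` by `e_j + e_i` if necessary (this
works because `2 = 0`). For `v = e_p` the projection of `e_q` to `v^⊥` has norm
`B(e_q, e_q) + B(e_p, e_q)`. If these vanished for all `q` both for `p = i` and for `p = j`, rows
`i` and `j` of the Gram matrix would both equal its diagonal, contradicting nonsingularity.
-/

open Matrix

def Fin.succAboveSumUnitEquiv {m : ℕ} (p : Fin (m + 1)) : Fin m ⊕ Unit ≃ Fin (m + 1) :=
  ((finSuccEquiv' p).trans (Equiv.optionEquivSumPUnit (Fin m))).symm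

@[simp]
theorem Fin.succAboveSumUnitEquiv_inl {m : ℕ} (p : Fin (m + 1)) (i : Fin m) :
    Fin.succAboveSumUnitEquiv p (.inl i) = p.succAbove i := by
  simp [Fin.succAboveSumUnitEquiv]

@[simp]
theorem Fin.succAboveSumUnitEquiv_inr {m : ℕ} (p : Fin (m + 1)) (u : Unit) :
    Fin.succAboveSumUnitEquiv p (.inr u) = p := by
  simp [Fin.succAboveSumUnitEquiv]

namespace Matrix

variable {ι R : Type*} [Fintype ι] [DecidableEq ι] [CommRing R]

def Congruent (M N : Matrix ι ι R) : Prop :=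
  ∃ S : Matrix ι ι R, IsUnit S.det ∧ Sᵀ * M * S = N

namespace Congruent

variable {M N P : Matrix ι ι R}

theorem refl (M : Matrix ι ι R) : Congruent M M :=
  ⟨1, by simp, by simp⟩

theorem trans (h₁ : Congruent M N) (h₂ : Congruent N P) : Congruent M P := by
  obtain ⟨S, hS, rfl⟩ := h₁
  obtain ⟨T, hT, rfl⟩ := h₂
  refine ⟨S * T, by simpa only [det_mul] using hS.mul hT, ?_⟩
  simp only [transpose_mul, Matrix.mul_assoc]

theorem isSymm (h : Congruent M N) (hM : M.IsSymm) : N.IsSymm := by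
  obtain ⟨S, -, rfl⟩ := h
  simp only [IsSymm, transpose_mul, transpose_transpose, hM.eq, Matrix.mul_assoc]

theorem isUnit_det (h : Congruent M N) (hM : IsUnit M.det) : IsUnit N.det := by
  obtain ⟨S, hS, rfl⟩ := h
  simpa only [det_mul, det_transpose] using (hS.mul hM).mul hS

theorem submatrix_equiv {κ : Type*} [Fintype κ] [DecidableEq κ] (h : Congruent M N)
    (e : κ ≃ ι) : Congruent (M.submatrix e e) (N.submatrix e e) := by
  obtain ⟨S, hS, rfl⟩ := h
  refine ⟨S.submatrix e e, by rwa [det_submatrix_equiv_self], ?_⟩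
  rw [transpose_submatrix, submatrix_mul_equiv, submatrix_mul_equiv]

theorem fromBlocks_zero_zero {κ : Type*} [Fintype κ] [DecidableEq κ] (h : Congruent M N)
    (D : Matrix κ κ R) : Congruent (fromBlocks M 0 0 D) (fromBlocks N 0 0 D) := by
  obtain ⟨S, hS, rfl⟩ := h
  refine ⟨fromBlocks S 0 0 1, by rwa [det_fromBlocks_zero₂₁, det_one, mul_one], ?_⟩
  simp [fromBlocks_transpose, fromBlocks_multiply]

end Congruent

/-- Congruence by the change of basis `e b ↦ e b + c b • e p`. -/
theorem congruent_shear (M : Matrix ι ι R) (p : ι) (c : ι → R) (hc : c p = 0) :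
    Congruent M (of fun a b => M a b + M a p * c b + c a * M p b + c a * M p p * c b) := by
  set X := vecMulVec (Pi.single p 1) c
  have hX : X * X = 0 := by
    simp [X, vecMulVec_mul_vecMulVec, dotProduct_single, hc]
  refine ⟨1 + X, IsUnit.of_mul_eq_one (1 - X).det ?_, ?_⟩
  · rw [← det_mul, Matrix.mul_sub, Matrix.add_mul, Matrix.add_mul, hX]
    simp
  · have hexp : (1 + X)ᵀ * M * (1 + X) = M + M * X + Xᵀ * M + Xᵀ * M * X := by
      rw [transpose_add, transpose_one]; noncomm_ring
    rw [hexp]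
    ext a b
    simp [X, transpose_vecMulVec, mul_vecMulVec, vecMulVec_mul, vecMulVec_apply]

theorem exists_congruent_clear_row (M : Matrix ι ι R) (p : ι) (hp : M p p = 1) :
    ∃ N, Congruent M N ∧ N p p = 1 ∧ (∀ l ≠ p, N p l = 0) ∧
      ∀ a ≠ p, N a a = M a a - M a p * M p a := by
  refine ⟨_, congruent_shear M p (fun b => if b = p then 0 else -M p b) (if_pos rfl),
    ?_, fun l hl => ?_, fun a ha => ?_⟩ <;> simp [*]
  ring

section ZModTwo

variable {M : Matrix ι ι (ZMod 2)} {i j : ι}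

theorem exists_congruent_diag_eq_one (hM : M.IsSymm) (hi : M i i = 1) (hji : j ≠ i) :
    ∃ N, Congruent M N ∧ N i i = 1 ∧ N j j = 1 := by
  obtain hj | hj : M j j = 0 ∨ M j j = 1 := by generalize M j j = x; revert x; decide
  · refine ⟨_, congruent_shear M i (Pi.single j 1) (Pi.single_eq_of_ne hji.symm 1), ?_, ?_⟩
    · simp [hji.symm, hi]
    · simpa [hj, hi, hM.apply i j] using CharTwo.add_self_eq_zero (M i j)
  · exact ⟨M, .refl M, hi, hj⟩

theorem exists_pivot_of_isUnit_det (hdet : IsUnit M.det) (hi : M i i = 1) (hj : M j j = 1)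
    (hij : i ≠ j) : ∃ p, M p p = 1 ∧ ∃ q ≠ p, M q q ≠ M p q := by
  by_contra! h
  have hrow : ∀ p, M p p = 1 → M p = fun q => M q q := fun p hp => funext fun q => by
    rcases eq_or_ne q p with rfl | hq
    · rfl
    · exact (h p hp q hq).symm
  simp [det_zero_of_row_eq hij ((hrow i hi).trans (hrow j hj).symm)] at hdet

theorem exists_congruent_pivot (hM : M.IsSymm) (hdet : IsUnit M.det) (hi : M i i = 1)
    (hji : j ≠ i) :
    ∃ N, Congruent M N ∧ ∃ p, N p p = 1 ∧ (∀ l ≠ p, N p l = 0) ∧ ∃ q ≠ p, N q q = 1 := by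
  obtain ⟨M₁, hM₁, hi₁, hj₁⟩ := exists_congruent_diag_eq_one hM hi hji
  obtain ⟨p, hp, q, hqp, hq⟩ :=
    exists_pivot_of_isUnit_det (hM₁.isUnit_det hdet) hi₁ hj₁ hji.symm
  obtain ⟨N, hN, hpp, hrow, hdiag⟩ := exists_congruent_clear_row M₁ p hp
  refine ⟨N, hM₁.trans hN, p, hpp, hrow, q, hqp, ?_⟩
  rw [hdiag q hqp, (hM₁.isSymm hM).apply p q]
  revert hq
  generalize M₁ q q = x
  generalize M₁ p q = y
  revert x y
  decide

end ZModTwo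

section Pivot

variable {m : ℕ} {N : Matrix (Fin (m + 1)) (Fin (m + 1)) R} {p : Fin (m + 1)}

theorem submatrix_succAboveSumUnitEquiv_of_pivot (hN : N.IsSymm) (hpp : N p p = 1)
    (hrow : ∀ l ≠ p, N p l = 0) :
    N.submatrix (Fin.succAboveSumUnitEquiv p) (Fin.succAboveSumUnitEquiv p) =
      fromBlocks (N.submatrix p.succAbove p.succAbove) 0 0 1 := by
  ext (i | u) (j | v) <;> simp [hpp, hrow, hN.apply p, Fin.succAbove_ne]

theorem isUnit_det_submatrix_succAbove_of_pivot (hN : N.IsSymm) (hpp : N p p = 1)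
    (hrow : ∀ l ≠ p, N p l = 0) (hdet : IsUnit N.det) :
    IsUnit (N.submatrix p.succAbove p.succAbove).det := by
  rwa [← det_submatrix_equiv_self (Fin.succAboveSumUnitEquiv p),
    submatrix_succAboveSumUnitEquiv_of_pivot hN hpp hrow, det_fromBlocks_zero₂₁, det_one,
    mul_one] at hdet

theorem congruent_one_of_pivot (hN : N.IsSymm) (hpp : N p p = 1) (hrow : ∀ l ≠ p, N p l = 0)
    (h : Congruent (N.submatrix p.succAbove p.succAbove) 1) : Congruent N 1 := by
  have := (h.fromBlocks_zero_zero (1 : Matrix Unit Unit R)).submatrix_equiv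
    (Fin.succAboveSumUnitEquiv p).symm
  rwa [← submatrix_succAboveSumUnitEquiv_of_pivot hN hpp hrow, fromBlocks_one,
    submatrix_submatrix, Equiv.self_comp_symm, submatrix_id_id, submatrix_one_equiv] at this

end Pivot

theorem congruent_one_of_exists_diag_eq_one {n : ℕ} {M : Matrix (Fin n) (Fin n) (ZMod 2)}
    (hM : M.IsSymm) (hdet : IsUnit M.det) (hdiag : ∃ i, M i i = 1) : Congruent M 1 := by
  induction n with
  | zero => exact hdiag.elim fun i _ => i.elim0
  | succ m ih =>
    obtain ⟨i, hi⟩ := hdiag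
    rcases m with _ | m
    · have hM1 : M = 1 := by
        ext a b
        rw [Subsingleton.elim (α := Fin 1) a i, Subsingleton.elim (α := Fin 1) b i, hi,
          one_apply_eq]
      exact hM1 ▸ .refl M
    obtain ⟨j, hji⟩ := exists_ne i
    obtain ⟨N, hMN, p, hpp, hrow, q, hqp, hqq⟩ := exists_congruent_pivot hM hdet hi hji
    obtain ⟨q, rfl⟩ := Fin.exists_succAbove_eq hqp
    have hN := hMN.isSymm hM
    exact hMN.trans <| congruent_one_of_pivot hN hpp hrow <| ih (hN.submatrix _)
      (isUnit_det_submatrix_succAbove_of_pivot hN hpp hrow (hMN.isUnit_det hdet)) ⟨q, hqq⟩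

end Matrix

/-- Every nonsingular nonalternating symmetric bilinear form over `𝔽₂` admits an
orthonormal basis. -/
theorem stmt_15 (n : ℕ) (M : Matrix (Fin n) (Fin n) (ZMod 2))
    (hsymm : Mᵀ = M) (hdet : IsUnit M.det) (hnonalt : ∃ i, M i i = 1) :
    ∃ S : Matrix (Fin n) (Fin n) (ZMod 2), IsUnit S.det ∧ Sᵀ * M * S = 1 :=
  congruent_one_of_exists_diag_eq_one hsymm hdet hnonalt
end

section
/- Let V be a finite-dimensional vector space over the field ZMod 2 and let B : V →ₗ[ZMod 2] V →ₗ[ZMod 2] ZMod 2 be a symmetric bilinear form (B v w = B w v) which is nondegenerate (for every v, if B v w = 0 for all w then v = 0). Then there exists a unique element c : V such that B v v = B c v for every v : V; moreover c = 0 if and only if B is alternating (B v v = 0 for all v). In particular v ↦ B v v is ZMod 2-linear. -/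
/-!
In characteristic 2 the cross terms of `B (v + w) (v + w)` cancel by symmetry, and over `𝔽₂`
every scalar satisfies `a ^ 2 = a`, so the diagonal `v ↦ B v v` is a linear functional. A
nondegenerate form on a finite-dimensional space identifies `V` with its dual, so this functional
is `B c` for a unique `c`, and `c = 0` exactly when the functional vanishes.
-/

open LinearMap (BilinForm)

namespace LinearMap.BilinForm

theorem apply_add_add_of_charTwo {R M : Type*} [CommRing R] [CharP R 2]
    [AddCommGroup M] [Module R M] (B : BilinForm R M) (hB : ∀ v w, B v w = B w v) (v w : M) :
    B (v + w) (v + w) = B v v + B w w := by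
  simp only [map_add, LinearMap.add_apply, hB w v]
  linear_combination CharTwo.add_self_eq_zero (B v w)

def diagOfSymm {V : Type*} [AddCommGroup V] [Module (ZMod 2) V]
    (B : BilinForm (ZMod 2) V) (hB : ∀ v w, B v w = B w v) : Module.Dual (ZMod 2) V where
  toFun v := B v v
  map_add' := B.apply_add_add_of_charTwo hB
  map_smul' a v := by
    simp only [map_smul, smul_apply, smul_eq_mul, RingHom.id_apply, ← mul_assoc, ← sq,
      ZMod.pow_card]

theorem bijective_of_separatingLeft {K W : Type*} [Field K] [AddCommGroup W]
    [Module K W] [FiniteDimensional K W] {B : BilinForm K W} (hB : B.SeparatingLeft) :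
    Function.Bijective B := by
  have hinj : Function.Injective B :=
    ker_eq_bot.mp (separatingLeft_iff_ker_eq_bot.mp hB)
  exact ⟨hinj, (injective_iff_surjective_of_finrank_eq_finrank
    Subspace.dual_finrank_eq.symm).mp hinj⟩

end LinearMap.BilinForm

/-- The characteristic element of a nondegenerate symmetric bilinear form over `𝔽₂`:
there is a unique `c` with `B v v = B c v` for all `v`; it vanishes iff `B` is
alternating; and `v ↦ B v v` is linear. -/
theorem stmt_16 (V : Type*) [AddCommGroup V] [Module (ZMod 2) V]
    [FiniteDimensional (ZMod 2) V]
    (B : V →ₗ[ZMod 2] V →ₗ[ZMod 2] ZMod 2)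
    (hsymm : ∀ v w : V, B v w = B w v)
    (hnd : ∀ v : V, (∀ w : V, B v w = 0) → v = 0) :
    (∃! c : V, ∀ v : V, B v v = B c v) ∧
      (∀ c : V, (∀ v : V, B v v = B c v) → (c = 0 ↔ ∀ v : V, B v v = 0)) ∧
      IsLinearMap (ZMod 2) fun v : V => B v v := by
  have hchar : ∀ c, (∀ v, B v v = B c v) ↔ B c = BilinForm.diagOfSymm B hsymm := by
    intro c
    rw [LinearMap.ext_iff]
    exact forall_congr' fun v ↦ eq_comm
  refine ⟨?_, fun c hc ↦ ?_, (BilinForm.diagOfSymm B hsymm).isLinear⟩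
  · simp only [hchar]
    exact (BilinForm.bijective_of_separatingLeft hnd).existsUnique _
  · simp only [hc]
    exact ⟨fun h v ↦ by rw [h, map_zero, LinearMap.zero_apply], hnd c⟩
end

section
/- Let r ≥ 1 and let a : Fin r → ℤ satisfy a i ≥ 2 for all i. Define v : Fin r → ℚ backwards by v (r−1) := a (r−1) and v j := a j − 1 / (v (j+1)) for j < r−1 (then v j > 1 for all j, so all v j are nonzero and the recursion is well-defined). Let m, q : ℤ with m > q > 0, Int.gcd m q = 1, and v 0 = (m : ℚ) / q. Let C : Matrix (Fin r) (Fin r) ℤ be the tridiagonal matrix with C i i = a i, C i j = 1 whenever the indices i, j are adjacent (|i − j| = 1), and C i j = 0 otherwise. Then C.det = m, and the (0,0) entry of the inverse of C over ℚ satisfies ((C.map (Int.cast : ℤ → ℚ))⁻¹) 0 0 = (q : ℚ) / m. In particular C presents the cyclic linking pairing ⟨q/m⟩ on ℤ/m. -/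
/-!
Write `D b` for the determinant of the linear plumbing matrix of `b = (b₀, …, bₙ)`. Expanding
along the first row and then the first column gives the continuant recursion
`D b = b₀ · D (tail b) - D (tail (tail b))`. By induction, `D b` and `D (tail b)` are coprime,
`0 < D (tail b) < D b` as soon as all `bᵢ ≥ 2`, and the Hirzebruch–Jung value satisfies
`v₀ = D b / D (tail b)` (since `b₀ - 1 / (D t / D t') = (b₀ D t - D t') / D t`).
So `m / q` and `D a / D (tail a)` are two reduced fractions with positive denominators, whence
`D a = m` and `D (tail a) = q`; and the `(0,0)` cofactor of `C` is `D (tail a)`, giving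
`(C⁻¹)₀₀ = q / m`.
-/

open Matrix

variable {R S : Type*}

def linearPlumbing [Zero R] [One R] {n : ℕ} (b : Fin n → R) : Matrix (Fin n) (Fin n) R :=
  Matrix.of fun i j => if i = j then b i
    else if (i : ℕ) + 1 = (j : ℕ) ∨ (j : ℕ) + 1 = (i : ℕ) then 1 else 0

section Entries

variable [Zero R] [One R]

@[simp]
theorem linearPlumbing_apply_self {n : ℕ} (b : Fin n → R) (i : Fin n) :
    linearPlumbing b i i = b i := by
  simp [linearPlumbing]

@[simp]
theorem linearPlumbing_zero_one {n : ℕ} (b : Fin (n + 2) → R) : linearPlumbing b 0 1 = 1 := by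
  simp [linearPlumbing]

@[simp]
theorem linearPlumbing_one_zero {n : ℕ} (b : Fin (n + 2) → R) : linearPlumbing b 1 0 = 1 := by
  simp [linearPlumbing]

@[simp]
theorem linearPlumbing_zero_succ_succ {n : ℕ} (b : Fin (n + 2) → R) (j : Fin n) :
    linearPlumbing b 0 j.succ.succ = 0 := by
  simp [linearPlumbing, Fin.ext_iff]

@[simp]
theorem linearPlumbing_succ_succ_zero {n : ℕ} (b : Fin (n + 2) → R) (i : Fin n) :
    linearPlumbing b i.succ.succ 0 = 0 := by
  simp [linearPlumbing, Fin.ext_iff]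

@[simp]
theorem linearPlumbing_submatrix_succ {n : ℕ} (b : Fin (n + 1) → R) :
    (linearPlumbing b).submatrix Fin.succ Fin.succ = linearPlumbing (Fin.tail b) := by
  ext i j
  simp [linearPlumbing, Fin.tail]

end Entries

theorem linearPlumbing_map [NonAssocSemiring R] [NonAssocSemiring S] (f : R →+* S) {n : ℕ}
    (b : Fin n → R) : (linearPlumbing b).map f = linearPlumbing (f ∘ b) := by
  ext i j
  simp only [linearPlumbing, map_apply, of_apply, Function.comp_apply]
  split_ifs <;> simp

theorem det_linearPlumbing_succ_succ [CommRing R] {n : ℕ} (b : Fin (n + 2) → R) :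
    (linearPlumbing b).det = b 0 * (linearPlumbing (Fin.tail b)).det
      - (linearPlumbing (Fin.tail (Fin.tail b))).det := by
  have hminor : ((linearPlumbing b).submatrix Fin.succ (Fin.succAbove 1)).det
      = (linearPlumbing (Fin.tail (Fin.tail b))).det := by
    have hcols : (Fin.succAbove 1 ∘ Fin.succ : Fin n → Fin (n + 2)) = Fin.succ ∘ Fin.succ :=
      funext Fin.one_succAbove_succ
    rw [det_succ_column_zero, Fin.sum_univ_succ]
    simp only [Fin.val_zero, pow_zero, one_mul, submatrix_apply, Fin.succAbove_zero,
      Fin.one_succAbove_zero, Fin.succ_zero_eq_one, linearPlumbing_one_zero,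
      linearPlumbing_succ_succ_zero, mul_zero, zero_mul, Finset.sum_const_zero, add_zero,
      submatrix_submatrix]
    rw [hcols, ← submatrix_submatrix, linearPlumbing_submatrix_succ,
      linearPlumbing_submatrix_succ]
  rw [det_succ_row_zero, Fin.sum_univ_succ, Fin.sum_univ_succ]
  simp [hminor, sub_eq_add_neg]

theorem isCoprime_det_linearPlumbing_tail [CommRing R] :
    ∀ {n : ℕ} (b : Fin (n + 1) → R),
      IsCoprime (linearPlumbing b).det (linearPlumbing (Fin.tail b)).det
  | 0, b => by simp [isCoprime_one_right]
  | n + 1, b => by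
    rw [det_linearPlumbing_succ_succ]
    have := (isCoprime_det_linearPlumbing_tail (Fin.tail b)).symm.neg_left
    simpa [sub_eq_neg_add, mul_comm] using this.add_mul_left_left (b 0)

theorem det_linearPlumbing_tail_pos_and_lt [CommRing R] [LinearOrder R] [IsStrictOrderedRing R] :
    ∀ {n : ℕ} (b : Fin (n + 1) → R), (∀ i, 2 ≤ b i) →
      0 < (linearPlumbing (Fin.tail b)).det ∧
        (linearPlumbing (Fin.tail b)).det < (linearPlumbing b).det
  | 0, b, hb => by
    simpa using one_lt_two.trans_le (hb 0)
  | n + 1, b, hb => by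
    obtain ⟨hpos, hlt⟩ := det_linearPlumbing_tail_pos_and_lt (Fin.tail b) fun i => hb i.succ
    refine ⟨hpos.trans hlt, ?_⟩
    rw [det_linearPlumbing_succ_succ]
    nlinarith [hb 0]

theorem eq_det_linearPlumbing_div_det_tail [Field R] [LinearOrder R] [IsStrictOrderedRing R] :
    ∀ {n : ℕ} (b w : Fin (n + 1) → R), (∀ i, 2 ≤ b i) →
      w (Fin.last n) = b (Fin.last n) →
      (∀ j : Fin n, w j.castSucc = b j.castSucc - 1 / w j.succ) →
      w 0 = (linearPlumbing b).det / (linearPlumbing (Fin.tail b)).det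
  | 0, b, w, _, hlast, _ => by simpa using hlast
  | n + 1, b, w, hb, hlast, hrec => by
    have htail : w 1 =
        (linearPlumbing (Fin.tail b)).det / (linearPlumbing (Fin.tail (Fin.tail b))).det :=
      eq_det_linearPlumbing_div_det_tail (Fin.tail b) (Fin.tail w) (fun i => hb i.succ)
        (by simpa only [Fin.tail, Fin.succ_last] using hlast)
        (fun j => by simpa only [Fin.tail, Fin.succ_castSucc] using hrec j.succ)
    have hne := (det_linearPlumbing_tail_pos_and_lt b hb).1.ne'
    have h0 : w 0 = b 0 - 1 / w 1 := hrec 0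
    rw [h0, htail, one_div_div, det_linearPlumbing_succ_succ]
    field_simp

theorem inv_linearPlumbing_zero_zero [Field R] {n : ℕ} (b : Fin (n + 1) → R) :
    (linearPlumbing b)⁻¹ 0 0 = (linearPlumbing (Fin.tail b)).det / (linearPlumbing b).det := by
  rw [inv_def, Matrix.smul_apply, adjugate_fin_succ_eq_det_submatrix, Ring.inverse_eq_inv',
    smul_eq_mul]
  simp [div_eq_inv_mul]

/-- Hirzebruch–Jung continued fractions and linear plumbing matrices: if
`m/q = [a₁,…,a_r]` with all `aᵢ ≥ 2`, then the associated tridiagonal matrix `C`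
has determinant `m` and `(C⁻¹)₀₀ = q/m`; i.e. `C` presents the cyclic linking
pairing `⟨q/m⟩` on `ℤ/m`. -/
theorem stmt_18 (r : ℕ) (hr : 1 ≤ r) (a : Fin r → ℤ) (ha : ∀ i, 2 ≤ a i)
    (v : Fin r → ℚ)
    (hv_last : v ⟨r - 1, by omega⟩ = (a ⟨r - 1, by omega⟩ : ℚ))
    (hv_rec : ∀ (j : ℕ) (h : j + 1 < r),
      v ⟨j, by omega⟩ = (a ⟨j, by omega⟩ : ℚ) - 1 / v ⟨j + 1, h⟩)
    (m q : ℤ) (hq : 0 < q) (hgcd : Int.gcd m q = 1)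
    (hv0 : v ⟨0, hr⟩ = (m : ℚ) / (q : ℚ))
    (C : Matrix (Fin r) (Fin r) ℤ)
    (hC : ∀ i j : Fin r,
      C i j = if i = j then a i
        else if (i : ℕ) + 1 = (j : ℕ) ∨ (j : ℕ) + 1 = (i : ℕ) then 1 else 0) :
    C.det = m ∧
      ((C.map (Int.cast : ℤ → ℚ))⁻¹) ⟨0, hr⟩ ⟨0, hr⟩ = (q : ℚ) / (m : ℚ) := by
  obtain ⟨s, rfl⟩ : ∃ s, r = s + 1 := ⟨r - 1, by omega⟩
  obtain rfl : C = linearPlumbing a := Matrix.ext hC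
  have hcast : ∀ {n : ℕ} (b : Fin n → ℤ),
      (linearPlumbing b).map (Int.cast : ℤ → ℚ) = linearPlumbing fun i => (b i : ℚ) :=
    fun b => linearPlumbing_map (Int.castRingHom ℚ) b
  have hcast_det : ∀ {n : ℕ} (b : Fin n → ℤ),
      ((linearPlumbing b).det : ℚ) = (linearPlumbing fun i => (b i : ℚ)).det := by
    intro n b
    rw [Int.cast_det, hcast]
  have hratio : (m : ℚ) / q = (linearPlumbing a).det / (linearPlumbing (Fin.tail a)).det := by
    rw [← hv0, hcast_det, hcast_det]
    exact eq_det_linearPlumbing_div_det_tail _ _ (fun i => by exact_mod_cast ha i) hv_last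
      (fun j => hv_rec j (by omega))
  obtain ⟨hm, hq'⟩ := Rat.div_int_inj hq (det_linearPlumbing_tail_pos_and_lt a ha).1 hgcd
    (Int.isCoprime_iff_gcd_eq_one.mp (isCoprime_det_linearPlumbing_tail a)) hratio
  refine ⟨hm.symm, ?_⟩
  rw [hcast, hm, hq', hcast_det, hcast_det]
  exact inv_linearPlumbing_zero_zero _
end

section
/- Let p be an odd prime and let G be a finite additive abelian p-group (every element of G has order a power of p, e.g. IsPGroup p for the additive group). Let λ : G →+ G →+ AddCircle (1 : ℚ) be symmetric (λ x y = λ y x) with bijective adjoint. Then there exist m : ℕ and elements z : Fin m → G such that: (i) G is the internal direct sum of the cyclic subgroups generated by the z i (the family of subgroups AddSubgroup.zmultiples (z i), viewed as ℤ-submodules, satisfies DirectSum.IsInternal); (ii) λ (z i) (z j) = 0 for all i ≠ j; and (iii) for each i, the additive order of λ (z i) (z i) in AddCircle (1 : ℚ) equals the additive order of z i, which is a power of p — equivalently, writing addOrderOf (z i) = p^{k_i}, one has λ (z i) (z i) = class of (u_i : ℚ) / p^{k_i} for some integer u_i coprime to p. That is, every nonsingular symmetric linking pairing on a finite abelian p-group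 with p odd splits orthogonally as a direct sum of cyclic pairings of the form ⟨u/p^k⟩ with u a unit. -/
/-!
Let `p ^ (n + 1)` be the exponent of `G` and `x` an element of that order. Nondegeneracy makes
`l x` of order `p ^ (n + 1)` as well, so some value `l x y` has that order. Polarization,
`2 • l x y = l (x + y) (x + y) - l x x - l y y`, and `p` odd then give `w ∈ {x, y, x + y}` with
`l w w` of order `p ^ (n + 1)`, hence of the order of `w`. For such `w` the cyclic group `ℤ w`
and the kernel of `l w` are complementary and orthogonal, because the elements of `ℚ/ℤ` killed
by `ord (l w w)` are exactly the multiples of `l w w`. The form stays nondegenerate on the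
kernel, and induction on it splits off the remaining cyclic summands.
-/

open AddSubgroup

theorem iSup_fin_cons {α : Type*} [CompleteLattice α] {m : ℕ} (a : α) (f : Fin m → α) :
    ⨆ i, (Fin.cons a f : Fin (m + 1) → α) i = a ⊔ ⨆ i, f i := by
  rw [← (finSuccEquiv m).symm.iSup_comp, iSup_option]
  rfl

theorem iSupIndep_fin_cons {α : Type*} [CompleteLattice α] [IsModularLattice α] {m : ℕ} {a : α}
    {f : Fin m → α} (ha : Disjoint a (⨆ i, f i)) (hf : iSupIndep f) :
    iSupIndep (Fin.cons a f : Fin (m + 1) → α) := by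
  rw [iSupIndep_def] at hf ⊢
  refine Fin.cases ?_ fun i => ?_
  · refine ha.mono_right (iSup₂_le fun j hj => ?_)
    cases j using Fin.cases with
    | zero => exact absurd rfl hj
    | succ j => exact le_iSup f j
  · have hle : ⨆ (j) (_ : j ≠ i.succ), (Fin.cons a f : Fin (m + 1) → α) j ≤
        (⨆ (j) (_ : j ≠ i), f j) ⊔ a := by
      refine iSup₂_le fun j hj => ?_
      cases j using Fin.cases with
      | zero => exact le_sup_right
      | succ j => exact le_sup_of_le_left (le_iSup₂_of_le j (ne_of_apply_ne Fin.succ hj) le_rfl)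
    refine Disjoint.mono_right hle ((hf i).disjoint_sup_right_of_disjoint_sup_left ?_)
    exact ha.symm.mono_left (sup_le (le_iSup f i) (iSup₂_le fun j _ => le_iSup f j))

namespace AddCircle

variable {𝕜 : Type*} [Field 𝕜] [LinearOrder 𝕜] [IsStrictOrderedRing 𝕜] {T : 𝕜} [Fact (0 < T)]

theorem mem_zmultiples_of_addOrderOf_nsmul_eq_zero {x y : AddCircle T} (hx : IsOfFinAddOrder x)
    (hy : addOrderOf x • y = 0) : y ∈ zmultiples x := by
  set n := addOrderOf x
  have hn : 0 < n := hx.addOrderOf_pos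
  obtain ⟨k, hk, -, hkx⟩ := exists_gcd_eq_one_of_isOfFinAddOrder hx
  obtain ⟨m, -, rfl⟩ := (AddCircle.nsmul_eq_zero_iff hn).1 hy
  rw [natCast_div_mul_eq_nsmul] at hkx ⊢
  have hgen : ((T / n : 𝕜) : AddCircle T) ∈ zmultiples x := by
    rwa [← hkx, mem_zmultiples_nsmul_iff, addOrderOf_period_div hn]
  exact nsmul_mem hgen m

theorem exists_eq_div_prime_pow_of_addOrderOf_eq {p k : ℕ} (hp : p.Prime) {x : AddCircle T}
    (hx : addOrderOf x = p ^ k) :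
    ∃ u : ℤ, Int.gcd u p = 1 ∧ x = ↑((u : 𝕜) / (p : 𝕜) ^ k * T) := by
  rcases k.eq_zero_or_pos with rfl | hk
  · refine ⟨1, Int.gcd_one_left _, ?_⟩
    rw [pow_zero, AddMonoid.addOrderOf_eq_one_iff] at hx
    simp [hx, coe_period]
  have hfin : IsOfFinAddOrder x := by
    rw [← addOrderOf_pos_iff, hx]
    exact pow_pos hp.pos k
  obtain ⟨m, hm, -, hmx⟩ := exists_gcd_eq_one_of_isOfFinAddOrder hfin
  rw [hx] at hm hmx
  refine ⟨m, ?_, by rw [← hmx]; push_cast; rfl⟩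
  exact Int.gcd_natCast_natCast m p ▸ Nat.Coprime.coprime_dvd_right (dvd_pow_self p hk.ne') hm

end AddCircle

theorem exists_exponent_eq_prime_pow_succ {G : Type*} [AddCommGroup G] [Finite G] [Nontrivial G]
    {p : ℕ} (hp : p.Prime) (hpG : ∀ g : G, ∃ c : ℕ, p ^ c • g = 0) :
    ∃ n, AddMonoid.exponent G = p ^ (n + 1) := by
  obtain ⟨x, hx⟩ :=
    AddMonoid.exists_addOrderOf_eq_exponent (AddMonoid.ExponentExists.of_finite (G := G))
  obtain ⟨c, hc⟩ := hpG x
  obtain ⟨k, -, hk⟩ := (Nat.dvd_prime_pow hp).1 (addOrderOf_dvd_of_nsmul_eq_zero hc)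
  obtain _ | n := k
  · rw [hx, pow_zero, AddMonoid.exp_eq_one_iff] at hk
    exact absurd hk (not_subsingleton G)
  · exact ⟨n, hx ▸ hk⟩

theorem exists_addOrderOf_apply_eq_prime_pow {G A : Type*} [AddCommGroup G] [AddCommGroup A]
    {p n : ℕ} [Fact p.Prime] (φ : G →+ A) (hφ : addOrderOf φ = p ^ (n + 1)) :
    ∃ y, addOrderOf (φ y) = p ^ (n + 1) := by
  by_contra! h
  have hkill : p ^ n • φ = 0 := by
    ext y
    by_contra hy
    refine h y (addOrderOf_eq_prime_pow hy ?_)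
    rw [← AddMonoidHom.nsmul_apply, ← hφ, addOrderOf_nsmul_eq_zero, AddMonoidHom.zero_apply]
  have := addOrderOf_dvd_of_nsmul_eq_zero hkill
  rw [hφ, Nat.pow_dvd_pow_iff_le_right (Fact.out : p.Prime).one_lt] at this
  omega

section Pairing

variable {G A : Type*} [AddCommGroup G] [AddCommGroup A]

def AddMonoidHom.NondegenerateOn (l : G →+ G →+ A) (K : AddSubgroup G) : Prop :=
  ∀ x ∈ K, (∀ y ∈ K, l x y = 0) → x = 0

theorem AddMonoidHom.NondegenerateOn.injective_restrict {l : G →+ G →+ A} {K : AddSubgroup G}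
    (hK : l.NondegenerateOn K) : Function.Injective ((l.comp K.subtype).compl₂ K.subtype) := by
  refine (injective_iff_map_eq_zero _).2 fun x hx => Subtype.ext (hK x x.2 fun y hy => ?_)
  exact DFunLike.congr_fun hx ⟨y, hy⟩

theorem AddMonoidHom.NondegenerateOn.ker_inf {l : G →+ G →+ A}
    (hsymm : ∀ x y, l x y = l y x) {K : AddSubgroup G} (hK : l.NondegenerateOn K) {z : G}
    (hsup : zmultiples z ⊔ ((l z).ker ⊓ K) = K) : l.NondegenerateOn ((l z).ker ⊓ K) := by
  rintro x ⟨hxz, hxK⟩ hx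
  refine hK x hxK fun y hy => ?_
  have hle : K ≤ (l x).ker := hsup ▸ sup_le
    (zmultiples_le.2 (by rw [AddMonoidHom.mem_ker, hsymm]; exact hxz)) fun y hy => hx y hy
  exact hle hy

theorem exists_nsmul_apply_self_ne_zero (l : G →+ G →+ A) (hsymm : ∀ x y, l x y = l y x)
    {x y : G} {k : ℕ} (h : (2 * k) • l x y ≠ 0) : ∃ w, k • l w w ≠ 0 := by
  by_contra! hw
  have hpolar : l (x + y) (x + y) - l x x - l y y = 2 • l x y := by
    simp only [map_add, AddMonoidHom.add_apply, hsymm y x]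
    abel
  apply h
  rw [mul_nsmul, ← hpolar, nsmul_sub, nsmul_sub, hw, hw, hw, sub_zero, sub_zero]

theorem exists_addOrderOf_apply_self_eq [Finite G] {p n : ℕ} [Fact p.Prime] (hodd : Odd p)
    (hexp : AddMonoid.exponent G = p ^ (n + 1)) (l : G →+ G →+ A) (hsymm : ∀ x y, l x y = l y x)
    (hl : Function.Injective l) : ∃ z, z ≠ 0 ∧ addOrderOf (l z z) = addOrderOf z := by
  have hp : p.Prime := Fact.out
  have hkill (g : G) : p ^ (n + 1) • g = 0 := hexp ▸ AddMonoid.exponent_nsmul_eq_zero g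
  obtain ⟨x, hx⟩ :=
    AddMonoid.exists_addOrderOf_eq_exponent (AddMonoid.ExponentExists.of_finite (G := G))
  obtain ⟨y, hy⟩ :=
    exists_addOrderOf_apply_eq_prime_pow (l x) (by rw [addOrderOf_injective l hl, hx, hexp])
  -- `2` is invertible modulo the odd order `p ^ (n + 1)` of `l x y`
  have h2 : (2 * p ^ n) • l x y ≠ 0 := by
    intro h
    have hdvd := addOrderOf_dvd_of_nsmul_eq_zero h
    rw [hy] at hdvd
    have hcop : Nat.Coprime (p ^ (n + 1)) 2 :=
      Nat.Coprime.pow_left _ (Nat.coprime_two_right.2 hodd)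
    have := (Nat.pow_dvd_pow_iff_le_right hp.one_lt).1 (hcop.dvd_of_dvd_mul_left hdvd)
    omega
  obtain ⟨w, hw⟩ := exists_nsmul_apply_self_ne_zero l hsymm h2
  have hww : addOrderOf (l w w) = p ^ (n + 1) :=
    addOrderOf_eq_prime_pow hw (by rw [← AddMonoidHom.map_nsmul, hkill, map_zero])
  refine ⟨w, by rintro rfl; simp at hw, Nat.dvd_antisymm (addOrderOf_map_dvd (l.flip w) w) ?_⟩
  exact hww ▸ addOrderOf_dvd_of_nsmul_eq_zero (hkill w)

theorem exists_mem_addOrderOf_apply_self_eq [Finite G] {p : ℕ} [Fact p.Prime] (hodd : Odd p)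
    (hpG : ∀ g : G, ∃ c : ℕ, p ^ c • g = 0) {l : G →+ G →+ A} (hsymm : ∀ x y, l x y = l y x)
    {K : AddSubgroup G} (hK : l.NondegenerateOn K) (hK0 : K ≠ ⊥) :
    ∃ z ∈ K, z ≠ 0 ∧ addOrderOf (l z z) = addOrderOf z := by
  have : Nontrivial K := (nontrivial_iff_ne_bot K).2 hK0
  obtain ⟨n, hn⟩ := exists_exponent_eq_prime_pow_succ (G := K) Fact.out
    fun k => (hpG k).imp fun _ hc => Subtype.ext hc
  obtain ⟨z, hz0, hzz⟩ := exists_addOrderOf_apply_self_eq hodd hn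
    ((l.comp K.subtype).compl₂ K.subtype) (fun x y => hsymm x y) hK.injective_restrict
  exact ⟨z, z.2, by simpa using hz0, by simpa [addOrderOf_coe] using hzz⟩

end Pairing

section Circle

variable {𝕜 : Type*} [Field 𝕜] [LinearOrder 𝕜] [IsStrictOrderedRing 𝕜] {T : 𝕜} [Fact (0 < T)]
  {G : Type*} [AddCommGroup G]

theorem isCompl_zmultiples_ker (l : G →+ G →+ AddCircle T) {z : G} (hz : IsOfFinAddOrder z)
    (hzz : addOrderOf (l z z) = addOrderOf z) : IsCompl (zmultiples z) (l z).ker := by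
  refine ⟨disjoint_def.2 fun {x} hx hxK => ?_, codisjoint_iff.2 (eq_top_iff.2 fun g _ => ?_)⟩
  · obtain ⟨k, rfl⟩ := mem_zmultiples_iff.1 hx
    rw [AddMonoidHom.mem_ker, map_zsmul, ← addOrderOf_dvd_iff_zsmul_eq_zero, hzz] at hxK
    exact addOrderOf_dvd_iff_zsmul_eq_zero.1 hxK
  · have hfin : IsOfFinAddOrder (l z z) := by
      rw [← addOrderOf_pos_iff, hzz]
      exact hz.addOrderOf_pos
    have hg : addOrderOf (l z z) • l z g = 0 := by
      rw [hzz, ← AddMonoidHom.nsmul_apply, ← map_nsmul, addOrderOf_nsmul_eq_zero, map_zero,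
        AddMonoidHom.zero_apply]
    obtain ⟨a, ha⟩ :=
      mem_zmultiples_iff.1 (AddCircle.mem_zmultiples_of_addOrderOf_nsmul_eq_zero hfin hg)
    refine mem_sup.2 ⟨a • z, zsmul_mem (mem_zmultiples z) a, g - a • z, ?_, add_sub_cancel _ _⟩
    rw [AddMonoidHom.mem_ker, map_sub, map_zsmul, ha, sub_self]

theorem exists_orthogonal_cyclic_decomposition [Finite G] {p : ℕ} [Fact p.Prime] (hodd : Odd p)
    (hpG : ∀ g : G, ∃ c : ℕ, p ^ c • g = 0) (l : G →+ G →+ AddCircle T)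
    (hsymm : ∀ x y, l x y = l y x) (K : AddSubgroup G) (hK : l.NondegenerateOn K) :
    ∃ (m : ℕ) (z : Fin m → G), iSupIndep (fun i => zmultiples (z i)) ∧
      ⨆ i, zmultiples (z i) = K ∧ Pairwise (fun i j => l (z i) (z j) = 0) ∧
      ∀ i, addOrderOf (l (z i) (z i)) = addOrderOf (z i) := by
  induction K using WellFoundedLT.induction with
  | _ K ih =>
  rcases eq_or_ne K ⊥ with rfl | hK0
  · exact ⟨0, Fin.elim0, iSupIndep_subsingleton _, by simp, fun i => i.elim0, fun i => i.elim0⟩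
  obtain ⟨z, hzK, hz0, hzz⟩ := exists_mem_addOrderOf_apply_self_eq hodd hpG hsymm hK hK0
  set K' := (l z).ker ⊓ K
  have hcompl := isCompl_zmultiples_ker l (isOfFinAddOrder_of_finite z) hzz
  have hsup : zmultiples z ⊔ K' = K := by
    rw [← sup_inf_assoc_of_le _ (zmultiples_le.2 hzK), hcompl.sup_eq_top, top_inf_eq]
  have hzK' : z ∉ K' := fun h => hz0 <| by
    rw [← AddMonoid.addOrderOf_eq_one_iff, ← hzz, h.1, addOrderOf_zero]
  obtain ⟨m, w, hind, hw, horth, hord⟩ :=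
    ih K' (lt_of_le_of_ne inf_le_right fun h => hzK' (h ▸ hzK)) (hK.ker_inf hsymm hsup)
  have hwK' (i : Fin m) : w i ∈ K' :=
    hw ▸ le_iSup (fun i => zmultiples (w i)) i (mem_zmultiples (w i))
  have hcons : (fun i => zmultiples ((Fin.cons z w : Fin (m + 1) → G) i)) =
      Fin.cons (zmultiples z) fun i => zmultiples (w i) := funext (Fin.cases rfl fun _ => rfl)
  refine ⟨m + 1, Fin.cons z w, ?_, ?_, ?_, Fin.cases hzz hord⟩
  · rw [hcons]
    exact iSupIndep_fin_cons (hw ▸ hcompl.disjoint.mono_right inf_le_left) hind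
  · rw [hcons, iSup_fin_cons, hw, hsup]
  · intro i j hij
    cases i using Fin.cases with
    | zero => cases j using Fin.cases with
      | zero => exact absurd rfl hij
      | succ j => exact (hwK' j).1
    | succ i => cases j using Fin.cases with
      | zero => exact (hsymm _ _).trans (hwK' i).1
      | succ j => exact horth (ne_of_apply_ne Fin.succ hij)

end Circle

/-- Every nonsingular symmetric linking pairing on a finite abelian `p`-group, `p` an
odd prime, splits orthogonally as a direct sum of cyclic pairings `⟨u/p^k⟩` with `u`
prime to `p`. -/
theorem stmt_19 (p : ℕ) [Fact p.Prime] (hodd : Odd p)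
    (G : Type*) [AddCommGroup G] [Fintype G]
    (hpG : ∀ g : G, ∃ c : ℕ, p ^ c • g = 0)
    (l : G →+ G →+ AddCircle (1 : ℚ))
    (hsymm : ∀ x y : G, l x y = l y x)
    (hadj : Function.Bijective fun x : G => l x) :
    ∃ (m : ℕ) (z : Fin m → G),
      DirectSum.IsInternal
          (fun i : Fin m => AddSubgroup.toIntSubmodule (AddSubgroup.zmultiples (z i))) ∧
        (∀ i j : Fin m, i ≠ j → l (z i) (z j) = 0) ∧
        ∀ i : Fin m,
          addOrderOf (l (z i) (z i)) = addOrderOf (z i) ∧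
          ∃ (k : ℕ) (u : ℤ), addOrderOf (z i) = p ^ k ∧ Int.gcd u p = 1 ∧
            l (z i) (z i) = (((u : ℚ) / ((p : ℚ) ^ k) : ℚ) : AddCircle (1 : ℚ)) := by
  have hnd : l.NondegenerateOn ⊤ := fun x _ hx =>
    hadj.injective (AddMonoidHom.ext fun y => by rw [hx y (mem_top y), map_zero]; rfl)
  obtain ⟨m, z, hind, hsup, horth, hord⟩ :=
    exists_orthogonal_cyclic_decomposition hodd hpG l hsymm ⊤ hnd
  refine ⟨m, z, ?_, horth, fun i => ⟨hord i, ?_⟩⟩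
  · rw [DirectSum.isInternal_submodule_iff_iSupIndep_and_iSup_eq_top]
    exact ⟨hind.map_orderIso toIntSubmodule, by rw [← toIntSubmodule.map_iSup, hsup]; rfl⟩
  · obtain ⟨c, hc⟩ := hpG (z i)
    obtain ⟨k, -, hk⟩ := (Nat.dvd_prime_pow Fact.out).1 (addOrderOf_dvd_of_nsmul_eq_zero hc)
    obtain ⟨u, hu, hlu⟩ :=
      AddCircle.exists_eq_div_prime_pow_of_addOrderOf_eq Fact.out ((hord i).trans hk)
    exact ⟨k, u, hk, hu, by rwa [mul_one] at hlu⟩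
end
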